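/- With c1M = 2H1+4H2, c2M = 8H1H2+6H2^2, c1 = 4H1+5H2, c2 = 16H1H2+14H2^2, c3 = 32H1H2^2+14H2^3, c4 = 24H1H2^3 in Z[H1,H2]/(H1^2,H2^4), the coefficient of H1H2^3 in (c2M − c1M·c1 − c2 + c1^2)·c2 + (−c1M + 2c1)·c3 + c4 equals 336. -/

import Mathlib

open MvPolynomial in
/-- The cohomology ring of P¹ × P³ is ℤ[H1,H2]/(H1², H2⁴). -/
noncomputable abbrev CohP1P3 : Type :=
  MvPolynomial (Fin 2) ℤ ⧸
    Ideal.span ({X 0 ^ 2, X 1 ^ 4} : Set (MvPolynomial (Fin 2) ℤ))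

noncomputable def H1 : CohP1P3 := Ideal.Quotient.mk _ (MvPolynomial.X 0)
noncomputable def H2 : CohP1P3 := Ideal.Quotient.mk _ (MvPolynomial.X 1)

theorem H1_sq : H1 ^ 2 = 0 :=
  Ideal.Quotient.eq_zero_iff_mem.mpr (Ideal.subset_span (by simp))

theorem H2_pow_four : H2 ^ 4 = 0 :=
  Ideal.Quotient.eq_zero_iff_mem.mpr (Ideal.subset_span (by simp))

/-- Corrected Harris–Tu formula: (c2M − c1M·c1 − c2 + c1²)·c2 + (−c1M + 2c1)·c3 + c4
equals 336·H1H2³ in ℤ[H1,H2]/(H1²,H2⁴), i.e. the coefficient of H1H2³ is 336. -/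
theorem c2Z_value :
    ∀ c1M c2M c1 c2 c3 c4 : CohP1P3,
      c1M = 2 * H1 + 4 * H2 → c2M = 8 * H1 * H2 + 6 * H2 ^ 2 →
      c1 = 4 * H1 + 5 * H2 → c2 = 16 * H1 * H2 + 14 * H2 ^ 2 →
      c3 = 32 * H1 * H2 ^ 2 + 14 * H2 ^ 3 → c4 = 24 * H1 * H2 ^ 3 →
      (c2M - c1M * c1 - c2 + c1 ^ 2) * c2 + (-c1M + 2 * c1) * c3 + c4
        = 336 * (H1 * H2 ^ 3) := by
  rintro _ _ _ _ _ _ rfl rfl rfl rfl rfl rfl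
  -- in ℤ[H1, H2] the two sides differ by (128 H1 H2 + 400 H2²) H1² + 42 H2⁴
  linear_combination (128 * H1 * H2 + 400 * H2 ^ 2) * H1_sq + 42 * H2_pow_four
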